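/- Let (X, τ) and (Y, σ) be scattered spaces and f : (X, τ) → (Y, σ) a d-map. Then for any ordinal λ, f is also a d-map from (X, τ_λ) to (Y, σ_λ), where τ_λ and σ_λ are the λ-th Icard topologies based on τ and σ respectively. -/

import Mathlib

open Ordinal Set

noncomputable section

universe u

/-! ## Basic topological notions (explicit topologies) -/

/-- The derived set (set of limit points) of `A` w.r.t. the topology `t`. -/
def dSet {X : Type u} (t : TopologicalSpace X) (A : Set X) : Set X :=
  {x | ∀ U : Set X, t.IsOpen U → x ∈ U → ∃ y, y ∈ U ∩ A ∧ y ≠ x}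

/-- Transfinite iterates of the derived-set operator, starting from the whole space. -/
def dIter {X : Type u} (t : TopologicalSpace X) (o : Ordinal.{u}) : Set X :=
  Ordinal.limitRecOn o Set.univ (fun _ ih => dSet t ih)
    (fun o _ ih => ⋂ (o' : Ordinal.{u}) (h : o' < o), ih o' h)

/-- The Cantor–Bendixson rank of a point: the least `ξ` with `x ∉ d^{ξ+1} X`. -/
def ptRank {X : Type u} (t : TopologicalSpace X) (x : X) : Ordinal.{u} :=
  sInf {ξ : Ordinal.{u} | x ∉ dIter t (ξ + 1)}

/-- The rank of a space: `sup_{x ∈ X} (ρ(x) + 1)`. -/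
def spRank (X : Type u) (t : TopologicalSpace X) : Ordinal.{u} :=
  ⨆ x : X, ptRank t x + 1

/-- A space is scattered if every nonempty subset has an isolated point. -/
def IsScattered {X : Type u} (t : TopologicalSpace X) : Prop :=
  ∀ A : Set X, A.Nonempty → ∃ x ∈ A, ∃ U : Set X, t.IsOpen U ∧ U ∩ A = {x}

/-- A `d`-map: continuous, open and pointwise discrete. -/
def IsDMap {X : Type u} {Y : Type*} (t : TopologicalSpace X) (s : TopologicalSpace Y)
    (f : X → Y) : Prop :=
  @Continuous _ _ t s f ∧ @IsOpenMap _ _ t s f ∧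
    ∀ y : Y, ∀ x : X, f x = y →
      ∃ U : Set X, t.IsOpen U ∧ x ∈ U ∧ ∀ z ∈ U, f z = y → z = x

/-! ## Hyperexponentials and hyperlogarithms -/

/-- The exponential `e ξ = -1 + ω^ξ`. -/
def eFun (x : Ordinal.{u}) : Ordinal.{u} := ω ^ x - 1

/-- `E` is the family of hyperexponentials: a family of normal functions with `E 1 = e`,
`E (α+β) = E α ∘ E β`, pointwise minimal among all such families. -/
def IsHyperexpFamily (E : Ordinal.{u} → Ordinal.{u} → Ordinal.{u}) : Prop :=
  (∀ a, Order.IsNormal (E a)) ∧ E 1 = eFun ∧ (∀ a b, E (a + b) = E a ∘ E b) ∧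
    ∀ F : Ordinal.{u} → Ordinal.{u} → Ordinal.{u},
      (∀ a, Order.IsNormal (F a)) → F 1 = eFun → (∀ a b, F (a + b) = F a ∘ F b) →
        ∀ a b, E a b ≤ F a b

/-- The end logarithm: `ℓ 0 = 0` and `ℓ ξ` is the unique `β` with `ξ = α + ω^β`. -/
def ellFun (x : Ordinal.{u}) : Ordinal.{u} :=
  if x = 0 then 0 else sInf {b : Ordinal.{u} | ∃ a, x = a + ω ^ b}

/-- An initial function maps initial segments onto initial segments. -/
def IsInitialFun (f : Ordinal.{u} → Ordinal.{u}) : Prop :=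
  ∀ o : Ordinal.{u}, ∃ o' : Ordinal.{u}, f '' Set.Iio o = Set.Iio o'

/-- `L` is the family of hyperlogarithms: a family of initial functions with `L 1 = ℓ`,
`L (α+β) = L β ∘ L α`, pointwise maximal among all such families. -/
def IsHyperlogFamily (L : Ordinal.{u} → Ordinal.{u} → Ordinal.{u}) : Prop :=
  (∀ a, IsInitialFun (L a)) ∧ L 1 = ellFun ∧ (∀ a b, L (a + b) = L b ∘ L a) ∧
    ∀ M : Ordinal.{u} → Ordinal.{u} → Ordinal.{u},
      (∀ a, IsInitialFun (M a)) → M 1 = ellFun → (∀ a b, M (a + b) = M b ∘ M a) →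
        ∀ a b, M a b ≤ L a b

/-! ## Icard topologies -/

/-- The generalized Icard topology `τ_λ` based on a space `(X, t)`, relative to a family `L`
of hyperlogarithms: the least topology containing `t` and all sets
`(α, β]_ξ = {x | α < ℓ^ξ ρ_t(x) ≤ β}` (including `α = -1`, i.e. `[0, β]_ξ`), for `ξ < λ`. -/
def IcardTop {X : Type u} (L : Ordinal.{u} → Ordinal.{u} → Ordinal.{u})
    (t : TopologicalSpace X) (lam : Ordinal.{u}) : TopologicalSpace X :=
  t ⊓ TopologicalSpace.generateFrom
    {S : Set X | ∃ ξ < lam,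
      (∃ b : Ordinal.{u}, S = {x | L ξ (ptRank t x) ≤ b}) ∨
      (∃ a b : Ordinal.{u}, a < b ∧ S = {x | a < L ξ (ptRank t x) ∧ L ξ (ptRank t x) ≤ b})}

/-! ## Ordinal spaces -/

/-- The ordinal corresponding to a point of `Θ.ToType`. -/
def ordVal {Θ : Ordinal.{u}} (x : Θ.ToType) : Ordinal.{u} :=
  @Ordinal.typein Θ.ToType (· < ·) isWellOrder_lt x

/-- The left topology `I₀` on (the canonical type of order type) `Θ`, generated by the
intervals `[0, β]`. -/
def leftTop (Θ : Ordinal.{u}) : TopologicalSpace Θ.ToType :=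
  TopologicalSpace.generateFrom {S : Set Θ.ToType | ∃ b : Θ.ToType, S = Set.Iic b}

/-- The interval topology `I₁` on `Θ`, generated by the sets `[0, β]` and `(α, β]`. -/
def intervalTop (Θ : Ordinal.{u}) : TopologicalSpace Θ.ToType :=
  TopologicalSpace.generateFrom
    {S : Set Θ.ToType | (∃ b, S = Set.Iic b) ∨ ∃ a b : Θ.ToType, S = Set.Ioc a b}

/-- The Icard topology `I_λ = (I₀)_λ` on the ordinal `Θ`: the least topology containing the
left topology and all sets `{x < Θ | α < ℓ^ξ x ≤ β}` for `ξ < λ`. -/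
def ordIcard (L : Ordinal.{u} → Ordinal.{u} → Ordinal.{u}) (Θ lam : Ordinal.{u}) :
    TopologicalSpace Θ.ToType :=
  leftTop Θ ⊓ TopologicalSpace.generateFrom
    {S : Set Θ.ToType | ∃ ξ < lam,
      (∃ b : Ordinal.{u}, S = {x | L ξ (ordVal x) ≤ b}) ∨
      (∃ a b : Ordinal.{u}, a < b ∧ S = {x | a < L ξ (ordVal x) ∧ L ξ (ordVal x) ≤ b})}

/-! ## Modal logic: GL and topological (d-)semantics -/

/-- Formulas of the basic modal language. -/
inductive Fml : Type
  | bot : Fml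
  | var : ℕ → Fml
  | imp : Fml → Fml → Fml
  | box : Fml → Fml

namespace Fml

/-- Negation. -/
def neg (p : Fml) : Fml := p.imp .bot

/-- Diamond. -/
def dia (p : Fml) : Fml := (p.neg.box).neg

end Fml

/-- The valuation determined by an assignment `V` of sets to propositional variables, in the
`d`-semantics: `⟦◇φ⟧ = d⟦φ⟧`, i.e. `⟦◻φ⟧` is the complement of the derived set of the
complement of `⟦φ⟧`. -/
def fval {X : Type u} (t : TopologicalSpace X) (V : ℕ → Set X) : Fml → Set X
  | .bot => ∅
  | .var n => V n
  | .imp p q => (fval t V p)ᶜ ∪ fval t V q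
  | .box p => (dSet t (fval t V p)ᶜ)ᶜ

/-- Classical tautologies (boxed formulas and variables treated as atoms). -/
def Tautology (φ : Fml) : Prop :=
  ∀ v : Fml → Bool, v .bot = false → (∀ p q : Fml, v (p.imp q) = (!(v p) || v q)) →
    v φ = true

/-- Provability in the Gödel–Löb provability logic `GL`. -/
inductive GLProv : Fml → Prop
  | taut {φ : Fml} : Tautology φ → GLProv φ
  | axK (p q : Fml) : GLProv (((p.imp q).box).imp ((p.box).imp q.box))
  | axLob (p : Fml) : GLProv ((((p.box).imp p).box).imp p.box)
  | mp {p q : Fml} : GLProv (p.imp q) → GLProv p → GLProv q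
  | nec {p : Fml} : GLProv p → GLProv p.box

/-- A set of formulas is GL-consistent if no finite conjunction of its members provably
implies `⊥`. -/
def GLConsistent (Γ : Set Fml) : Prop :=
  ¬ ∃ l : List Fml, (∀ φ ∈ l, φ ∈ Γ) ∧ GLProv (l.foldr .imp .bot)

/-- `Γ` is satisfied in the space `(X, t)`. -/
def SatisfiedIn {X : Type u} (t : TopologicalSpace X) (Γ : Set Fml) : Prop :=
  ∃ (V : ℕ → Set X) (x : X), ∀ φ ∈ Γ, x ∈ fval t V φ

/-- `GL` is strongly complete with respect to `(X, t)`. -/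
def StronglyCompleteFor {X : Type u} (t : TopologicalSpace X) : Prop :=
  ∀ Γ : Set Fml, GLConsistent Γ → SatisfiedIn t Γ

/-- Validity of a formula in a space under the `d`-semantics. -/
def ValidIn {X : Type u} (t : TopologicalSpace X) (φ : Fml) : Prop :=
  ∀ V : ℕ → Set X, fval t V φ = Set.univ

/-! ## Trees and ω-bouquets -/

/-- The upset topology of a relation: opens are the `R`-upward closed sets. -/
def upTop {T : Type u} (R : T → T → Prop) : TopologicalSpace T where
  IsOpen U := ∀ x ∈ U, ∀ y, R x y → y ∈ U
  isOpen_univ := fun x _ y _ => trivial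
  isOpen_inter := fun s t hs ht x hx y hR => ⟨hs x hx.1 y hR, ht x hx.2 y hR⟩
  isOpen_sUnion := fun S hS x hx y hR => by
    obtain ⟨s, hsS, hxs⟩ := hx
    exact ⟨s, hsS, hS s hsS x hxs y hR⟩

/-- A countable, converse well-founded tree. -/
structure IsOmegaTree {T : Type u} (R : T → T → Prop) : Prop where
  countable : Countable T
  trans : ∀ a b c, R a b → R b c → R a c
  irrefl : ∀ a, ¬ R a a
  predWellOrdered : ∀ t : T, IsWellOrder {s : T // R s t} (fun a b => R a.1 b.1)
  root : ∃! r : T, ∀ s : T, ¬ R s r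
  converseWellFounded : WellFounded (fun a b : T => R b a)

/-- The daughters (immediate successors) of a node. -/
def daughters {T : Type u} (R : T → T → Prop) (w : T) : Set T :=
  {v | R w v ∧ ¬ ∃ u, R w u ∧ R u v}

/-- The bouquet topology `σ_R`: the least topology extending the upset topology such that
whenever `w` has limit rank, `(v_i)` enumerates the daughters of `w` without repetition and
`n < ω`, the set `{w} ∪ ⋃_{i > n} ({v_i} ∪ R(v_i))` is open. -/
def sigmaTop {T : Type u} (R : T → T → Prop) : TopologicalSpace T :=
  upTop R ⊓ TopologicalSpace.generateFrom
    {S : Set T | ∃ w : T, Order.IsSuccLimit (ptRank (upTop R) w) ∧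
      ∃ v : ℕ → T, Function.Injective v ∧ Set.range v = daughters R w ∧
        ∃ n : ℕ, S = {w} ∪ ⋃ (i : ℕ) (_ : n < i), ({v i} ∪ {u | R (v i) u})}

/-! ## The club topology (via its neighborhood characterization) -/

/-- `C` is a club in (i.e. a closed unbounded subset of) the point `x`. -/
def IsClubIn {Θ : Ordinal.{u}} (C : Set Θ.ToType) (x : Θ.ToType) : Prop :=
  (∀ y ∈ C, y < x) ∧ (∀ z, z < x → ∃ y ∈ C, z < y) ∧
    ∀ z, z < x → (∃ w, w < z) → (∀ w, w < z → ∃ y ∈ C, w < y ∧ y < z) → z ∈ C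

/-- `t` is the club topology on `Θ`: a set `U` is a neighborhood of a point `x ∈ U` iff
`U` contains a club in `x` or `cf(x) < ℵ₁`. -/
def IsClubTop (Θ : Ordinal.{u}) (t : TopologicalSpace Θ.ToType) : Prop :=
  ∀ (U : Set Θ.ToType) (x : Θ.ToType), x ∈ U →
    (U ∈ @nhds _ t x ↔
      (Ordinal.cof (ordVal x) < Cardinal.aleph 1 ∨ ∃ C ⊆ U, IsClubIn C x))

/-! A d-map preserves derived sets under preimage, hence Cantor–Bendixson ranks:
`ρ_σ ∘ f = ρ_τ`. So the rank-defined generators of `τ_λ` are the `f`-preimages of those of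
`σ_λ`, i.e. `τ_λ = τ ⊓ f⁻¹ g` and `σ_λ = σ ⊓ g` for one topology `g` on `Y` (`⊓` is the common
refinement: Mathlib orders topologies by reverse inclusion). Refining a d-map's topologies by
such a pair keeps it a d-map, since `f (V ∩ f⁻¹ W) = f V ∩ W`. -/

section DMap

variable {X Y : Type u}

lemma dIter_zero (t : TopologicalSpace X) : dIter t 0 = Set.univ :=
  Ordinal.limitRecOn_zero _ _ _

lemma dIter_add_one (t : TopologicalSpace X) (o : Ordinal.{u}) :
    dIter t (o + 1) = dSet t (dIter t o) :=
  Ordinal.limitRecOn_add_one _ _ _ _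

lemma dIter_of_isSuccLimit (t : TopologicalSpace X) {o : Ordinal.{u}}
    (ho : Order.IsSuccLimit o) : dIter t o = ⋂ o' < o, dIter t o' :=
  Ordinal.limitRecOn_limit _ _ _ _ ho

variable {t : TopologicalSpace X} {s : TopologicalSpace Y} {f : X → Y}

lemma IsDMap.preimage_dSet (hf : IsDMap t s f) (A : Set Y) :
    f ⁻¹' dSet s A = dSet t (f ⁻¹' A) := by
  obtain ⟨hcont, hopen, hdisc⟩ := hf
  ext x
  constructor
  · intro hx U hU hxU
    obtain ⟨_, ⟨⟨z, hzU, rfl⟩, hzA⟩, hzx⟩ := hx (f '' U) (hopen U hU) ⟨x, hxU, rfl⟩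
    exact ⟨z, ⟨hzU, hzA⟩, fun h => hzx (congrArg f h)⟩
  · intro hx V hV hxV
    obtain ⟨U, hU, hxU, hUx⟩ := hdisc (f x) x rfl
    obtain ⟨z, ⟨⟨hzV, hzU⟩, hzA⟩, hzx⟩ :=
      hx (f ⁻¹' V ∩ U) (t.isOpen_inter _ _ (hcont.isOpen_preimage V hV) hU) ⟨hxV, hxU⟩
    exact ⟨f z, ⟨hzV, hzA⟩, fun h => hzx (hUx z hzU h)⟩

lemma IsDMap.preimage_dIter (hf : IsDMap t s f) (o : Ordinal.{u}) :
    f ⁻¹' dIter s o = dIter t o := by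
  induction o using limitRecOn with
  | zero => rw [dIter_zero, dIter_zero, preimage_univ]
  | add_one o ih => rw [dIter_add_one, dIter_add_one, hf.preimage_dSet, ih]
  | limit o ho ih =>
    simp only [dIter_of_isSuccLimit _ ho, preimage_iInter]
    exact iInter₂_congr ih

lemma IsDMap.ptRank_comp (hf : IsDMap t s f) : ptRank s ∘ f = ptRank t := by
  ext x
  simp only [Function.comp_apply, ptRank, ← hf.preimage_dIter, mem_preimage]

lemma IsDMap.inf_induced (hf : IsDMap t s f) (g : TopologicalSpace Y) :
    IsDMap (t ⊓ g.induced f) (s ⊓ g) f := by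
  obtain ⟨hcont, hopen, hdisc⟩ := hf
  refine ⟨?_, ?_, ?_⟩
  · rw [continuous_iff_le_induced, induced_inf]
    exact inf_le_inf_right _ (continuous_iff_le_induced.mp hcont)
  · refine @IsOpenMap.of_nhds_le _ _ f (t ⊓ g.induced f) (s ⊓ g) fun x => ?_
    rw [nhds_inf (t₁ := t) (t₂ := g.induced f), nhds_inf (t₁ := s) (t₂ := g),
      @nhds_induced _ _ g, Filter.push_pull]
    exact inf_le_inf_right _ (@IsOpenMap.nhds_le _ _ f t s hopen x)
  · intro y x hxy
    obtain ⟨U, hU, hxU, hUx⟩ := hdisc y x hxy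
    exact ⟨U, IsOpen.mono hU inf_le_left, hxU, hUx⟩

end DMap

/-- The paper's sets `(α, β]_ξ`, `ξ < λ`, as sets of ranks. -/
def icardIntervals (L : Ordinal.{u} → Ordinal.{u} → Ordinal.{u}) (lam : Ordinal.{u}) :
    Set (Set Ordinal.{u}) :=
  {S | ∃ ξ < lam, (∃ b, S = {o | L ξ o ≤ b}) ∨ (∃ a b, a < b ∧ S = {o | a < L ξ o ∧ L ξ o ≤ b})}

lemma icardTop_eq_inf_induced {X : Type u} (L : Ordinal.{u} → Ordinal.{u} → Ordinal.{u})
    (t : TopologicalSpace X) (lam : Ordinal.{u}) :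
    IcardTop L t lam =
      t ⊓ (TopologicalSpace.generateFrom (icardIntervals L lam)).induced (ptRank t) := by
  rw [induced_generateFrom_eq]
  refine congrArg (fun b => t ⊓ TopologicalSpace.generateFrom b) (Set.ext fun S => ?_)
  simp only [icardIntervals, mem_image, mem_ofPred_eq]
  constructor
  · rintro ⟨ξ, hξ, ⟨b, rfl⟩ | ⟨a, b, hab, rfl⟩⟩
    · exact ⟨_, ⟨ξ, hξ, Or.inl ⟨b, rfl⟩⟩, rfl⟩
    · exact ⟨_, ⟨ξ, hξ, Or.inr ⟨a, b, hab, rfl⟩⟩, rfl⟩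
  · rintro ⟨_, ⟨ξ, hξ, ⟨b, rfl⟩ | ⟨a, b, hab, rfl⟩⟩, rfl⟩
    · exact ⟨ξ, hξ, Or.inl ⟨b, rfl⟩⟩
    · exact ⟨ξ, hξ, Or.inr ⟨a, b, hab, rfl⟩⟩

theorem dMap_Icard_general {X Y : Type u} (t : TopologicalSpace X) (s : TopologicalSpace Y)
    (L : Ordinal.{u} → Ordinal.{u} → Ordinal.{u})
    (f : X → Y) (hf : IsDMap t s f) (lam : Ordinal.{u}) :
    IsDMap (IcardTop L t lam) (IcardTop L s lam) f := by
  rw [icardTop_eq_inf_induced, icardTop_eq_inf_induced, ← hf.ptRank_comp, ← induced_compose]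
  exact hf.inf_induced _

/-- If `f` is a d-map between scattered spaces `(X, τ)` and `(Y, σ)`, then
for any ordinal `λ`, `f` is also a d-map from `(X, τ_λ)` to `(Y, σ_λ)`. -/
theorem dMap_Icard {X Y : Type u} (t : TopologicalSpace X) (s : TopologicalSpace Y)
    (hX : IsScattered t) (hY : IsScattered s)
    (L : Ordinal.{u} → Ordinal.{u} → Ordinal.{u}) (hL : IsHyperlogFamily L)
    (f : X → Y) (hf : IsDMap t s f) (lam : Ordinal.{u}) :
    IsDMap (IcardTop L t lam) (IcardTop L s lam) f :=
  dMap_Icard_general t s L f hf lam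

end
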